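/- arXiv:1503.00175 — 2 statements merged into one kernel-verified Lean document; each statement's English description precedes it below -/
import Mathlib

section
/- If α ∈ ℝ is such that cot α is irrational (with sin α ≠ 0), then for every δ > 0 the set of real numbers of the form m·sin α + n·cos α with m, n ∈ ℤ and |m·cos α − n·sin α| < δ is relatively dense in ℝ. -/
/-!
Write `θ = cot α`. Dirichlet's theorem gives `q > 0` and `p` with `r = q θ - p` nonzero (as `θ` is
irrational) and of size `< ε`. Adding `q` to an integer `m` moves `m θ` by `r` modulo `1`, so within
`1 / |r|` such steps `m θ` comes within `|r|` of an integer: the integers `m` with `‖m θ‖ < ε` have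
gaps at most `1 + q / |r|`. Finally, with `η = m θ - n` one has `m cos α - n sin α = η sin α` and
`m sin α + n cos α = m / sin α - η cos α`, so the set in question lies within `ε` of the relatively
dense set of those `m / sin α`.
-/

open Real

def RelativelyDense (E : Set ℝ) : Prop :=
  ∃ L > 0, ∀ a : ℝ, ∃ x ∈ E, x ∈ Set.Icc a (a + L)

namespace RelativelyDense

variable {E F : Set ℝ}

theorem nonempty (hE : RelativelyDense E) : E.Nonempty := by
  obtain ⟨L, -, hL⟩ := hE
  obtain ⟨x, hx, -⟩ := hL 0
  exact ⟨x, hx⟩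

theorem of_forall_exists_abs_sub_le (hE : RelativelyDense E) {C : ℝ}
    (hF : ∀ x ∈ E, ∃ y ∈ F, |y - x| ≤ C) : RelativelyDense F := by
  have hC : 0 ≤ C := by
    obtain ⟨x, hx⟩ := hE.nonempty
    obtain ⟨y, -, hy⟩ := hF x hx
    exact (abs_nonneg _).trans hy
  obtain ⟨L, hL, hcover⟩ := hE
  refine ⟨L + 2 * C, by positivity, fun a => ?_⟩
  obtain ⟨x, hx, hxa, hxL⟩ := hcover (a + C)
  obtain ⟨y, hy, hyx⟩ := hF x hx
  rw [abs_le] at hyx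
  exact ⟨y, hy, by linarith, by linarith⟩

theorem image_mul (hE : RelativelyDense E) {c : ℝ} (hc : c ≠ 0) :
    RelativelyDense ((c * ·) '' E) := by
  obtain ⟨L, hL, hcover⟩ := hE
  refine ⟨|c| * L, by positivity, fun a => ?_⟩
  obtain ⟨b, rfl⟩ : ∃ b, a = c * b := ⟨a / c, (mul_div_cancel₀ a hc).symm⟩
  rcases hc.lt_or_gt with hc | hc
  · -- multiplication by `c < 0` reverses intervals
    obtain ⟨x, hx, hxb, hxL⟩ := hcover (b - L)
    rw [abs_of_neg hc]
    exact ⟨c * x, Set.mem_image_of_mem _ hx, by nlinarith, by nlinarith⟩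
  · obtain ⟨x, hx, hxb, hxL⟩ := hcover b
    rw [abs_of_pos hc]
    exact ⟨c * x, Set.mem_image_of_mem _ hx, by nlinarith, by nlinarith⟩

end RelativelyDense

theorem exists_nat_le_abs_add_mul_sub_int_lt (x : ℝ) {r : ℝ} (hr : r ≠ 0) :
    ∃ k : ℕ, (k : ℝ) ≤ 1 / |r| ∧ ∃ n : ℤ, |x + k * r - n| < |r| := by
  wlog hpos : 0 < r generalizing x r
  · obtain ⟨k, hk, n, hn⟩ :=
      this (-x) (neg_ne_zero.mpr hr) (neg_pos.mpr ((not_lt.mp hpos).lt_of_ne hr))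
    rw [abs_neg] at hk hn
    refine ⟨k, hk, -n, ?_⟩
    rw [← abs_neg]
    convert hn using 2
    push_cast; ring
  -- step from `Int.fract x` by `r` into `(1 - r, 1]`
  set f := Int.fract x
  have hf : f < 1 := Int.fract_lt_one x
  have hk := Nat.floor_le (div_nonneg (sub_nonneg.mpr hf.le) hpos.le)
  have hk' := Nat.lt_floor_add_one ((1 - f) / r)
  refine ⟨⌊(1 - f) / r⌋₊, ?_, ⌊x⌋ + 1, ?_⟩
  · rw [abs_of_pos hpos]
    exact hk.trans (div_le_div_of_nonneg_right (by linarith [Int.fract_nonneg x]) hpos.le)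
  · rw [le_div_iff₀ hpos] at hk
    rw [div_lt_iff₀ hpos] at hk'
    have hx : x = ⌊x⌋ + f := (Int.floor_add_fract x).symm
    rw [abs_of_pos hpos, abs_lt]
    push_cast
    constructor <;> nlinarith

theorem Irrational.exists_int_pos_abs_mul_sub_pos_lt {θ : ℝ} (hθ : Irrational θ) {ε : ℝ}
    (hε : 0 < ε) : ∃ q p : ℤ, 0 < q ∧ 0 < |q * θ - p| ∧ |q * θ - p| < ε := by
  obtain ⟨N, hN⟩ := exists_nat_one_div_lt hε
  obtain ⟨p, q, hq, -, hqp⟩ := Real.exists_int_int_abs_mul_sub_le θ N.succ_pos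
  refine ⟨q, p, hq, abs_pos.mpr (sub_ne_zero.mpr ((hθ.intCast_mul hq.ne').ne_int p)), ?_⟩
  refine hqp.trans_lt ((one_div_le_one_div_of_le (by positivity) ?_).trans_lt hN)
  push_cast; linarith

theorem Irrational.relativelyDense_int_abs_mul_sub_lt {θ : ℝ} (hθ : Irrational θ) {ε : ℝ}
    (hε : 0 < ε) : RelativelyDense ((↑) '' {m : ℤ | ∃ n : ℤ, |m * θ - n| < ε}) := by
  obtain ⟨q, p, hq, hr0, hrε⟩ := hθ.exists_int_pos_abs_mul_sub_pos_lt hε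
  refine ⟨1 + q / |q * θ - p|, by positivity, fun a => ?_⟩
  obtain ⟨k, hk, n, hn⟩ := exists_nat_le_abs_add_mul_sub_int_lt (⌈a⌉ * θ) (abs_pos.mp hr0)
  refine ⟨(⌈a⌉ + k * q : ℤ), ⟨_, ⟨n + k * p, ?_⟩, rfl⟩, ?_, ?_⟩
  · calc |((⌈a⌉ + k * q : ℤ) : ℝ) * θ - (n + k * p : ℤ)|
          = |⌈a⌉ * θ + k * (q * θ - p) - n| := by push_cast; ring_nf
      _ < ε := hn.trans hrε
  · have : (0 : ℝ) ≤ k * q := by positivity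
    push_cast
    linarith [Int.le_ceil a]
  · have : (k : ℝ) * q ≤ q / |q * θ - p| :=
      (mul_le_mul_of_nonneg_right hk (by positivity)).trans_eq (one_div_mul_eq_div _ _)
    push_cast
    linarith [Int.ceil_lt_add_one a]

theorem kronecker_relativelyDense (α : ℝ) (hsin : Real.sin α ≠ 0)
    (hirr : Irrational (Real.cos α / Real.sin α)) (δ : ℝ) (hδ : 0 < δ) :
    RelativelyDense {t : ℝ | ∃ m n : ℤ,
      t = m * Real.sin α + n * Real.cos α ∧
      |m * Real.cos α - n * Real.sin α| < δ} := by
  set s := Real.sin α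
  set c := Real.cos α
  have hs : 0 < |s| := abs_pos.mpr hsin
  have hM :=
    (hirr.relativelyDense_int_abs_mul_sub_lt (div_pos hδ hs)).image_mul (inv_ne_zero hsin)
  refine hM.of_forall_exists_abs_sub_le (C := δ / |s|) fun _ ⟨_, ⟨m, ⟨n, hn⟩, hm⟩, hx⟩ => ?_
  subst hm hx
  have herr : m * c - n * s = s * (m * (c / s) - n) := by field_simp
  have hval : m * s + n * c - s⁻¹ * m = -c * (m * (c / s) - n) := by
    field_simp
    linear_combination (m : ℝ) * Real.sin_sq_add_cos_sq α
  refine ⟨m * s + n * c, ⟨m, n, rfl, ?_⟩, ?_⟩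
  · rw [herr, abs_mul]
    exact (lt_div_iff₀' hs).mp hn
  · rw [hval, abs_mul, abs_neg]
    exact (mul_le_of_le_one_left (abs_nonneg _) (Real.abs_cos_le_one α)).trans hn.le
end

section
/- Suppose Z ⊆ ℂ is a nonempty set with the property: for some ε > 0 and R > 0, for every interval I ⊆ ℝ of length R there exists τ ∈ I and a map taking each z ∈ Z to some z' ∈ Z with |z + iτ − z'| < ε. Then, if z₀ ∈ Z, every interval [c, c+R+2ε] ⊆ ℝ contains Im z for some z ∈ Z with |Re z − Re z₀| < ε. -/
open Complex

theorem almost_periodic_set_imaginary_parts_dense (Z : Set ℂ) (hZ : Z.Nonempty)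
    (ε R : ℝ) (hε : 0 < ε) (hR : 0 < R)
    (hap : ∀ x : ℝ, ∃ τ ∈ Set.Icc x (x + R), ∀ z ∈ Z, ∃ z' ∈ Z,
      ‖z + I * τ - z'‖ < ε) :
    ∀ z₀ ∈ Z, ∀ c : ℝ, ∃ z ∈ Z, z.im ∈ Set.Icc c (c + R + 2 * ε) ∧
      |z.re - z₀.re| < ε := by
  intro z₀ hz₀ c
  obtain ⟨τ, ⟨hτ1, hτ2⟩, hτ⟩ := hap (c + ε - z₀.im)
  obtain ⟨z', hz', habs⟩ := hτ z₀ hz₀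
  have hre : |z'.re - z₀.re| < ε := by
    have := (abs_re_le_norm (z₀ + I * τ - z')).trans_lt habs
    simp at this
    rw [abs_sub_comm]
    simpa using this
  have him : |z₀.im + τ - z'.im| < ε := by
    have := (abs_im_le_norm (z₀ + I * τ - z')).trans_lt habs
    simpa using this
  refine ⟨z', hz', ⟨?_, ?_⟩, hre⟩
  · have := abs_lt.mp him
    linarith
  · have := abs_lt.mp him
    linarith
end
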